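/- Let σ_1 ≥ σ_2 ≥ … ≥ σ_r ≥ 0, let Σ = diag(σ_1,…,σ_r) ∈ ℝ^{r×r}, and let λ > 0. Then the infimum of ‖S − Σ‖_F² + λ‖S‖_2 over all matrices S ∈ ℝ^{r×r} equals the infimum of the same quantity over diagonal matrices S, i.e., inf_{S ∈ ℝ^{r×r}} { ‖S − Σ‖_F² + λ‖S‖_2 } = inf_{s ∈ ℝ^r} { ∑_{j=1}^r (s_j − σ_j)² + λ max_{1≤j≤r} |s_j| }. -/
import Mathlib


open Matrix

/-- Frobenius norm of a real matrix. -/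
noncomputable def frobNorm {m n : ℕ} (M : Matrix (Fin m) (Fin n) ℝ) : ℝ :=
  Real.sqrt (∑ i, ∑ j, (M i j) ^ 2)

/-- Spectral (ℓ2 operator) norm of a real matrix. -/
noncomputable def specNorm {m n : ℕ} (M : Matrix (Fin m) (Fin n) ℝ) : ℝ :=
  ‖(Matrix.toEuclideanLin M).toContinuousLinearMap‖

lemma frobNorm_sq {m n : ℕ} (M : Matrix (Fin m) (Fin n) ℝ) :
    frobNorm M ^ 2 = ∑ i, ∑ j, (M i j) ^ 2 := by
  rw [frobNorm, Real.sq_sqrt (by positivity)]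

lemma euc_norm_sq {r : ℕ} (x : EuclideanSpace ℝ (Fin r)) :
    ‖x‖ ^ 2 = ∑ i, (x i) ^ 2 := by
  rw [EuclideanSpace.norm_eq, Real.sq_sqrt (by positivity)]
  simp [sq_abs]

lemma specNorm_nonneg {m n : ℕ} (M : Matrix (Fin m) (Fin n) ℝ) : 0 ≤ specNorm M :=
  norm_nonneg _

lemma real_le_of_sq_le_sq {a b : ℝ} (ha : 0 ≤ a) (hb : 0 ≤ b) (h : a ^ 2 ≤ b ^ 2) : a ≤ b := by
  nlinarith

lemma toEuclideanLin_apply' {r : ℕ} (M : Matrix (Fin r) (Fin r) ℝ)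
    (x : EuclideanSpace ℝ (Fin r)) (i : Fin r) :
    ((Matrix.toEuclideanLin M).toContinuousLinearMap x) i
      = ∑ j, M i j * x j := rfl

/-- Pinching: each diagonal entry is bounded by the spectral norm. -/
lemma abs_diag_le_specNorm {r : ℕ} (S : Matrix (Fin r) (Fin r) ℝ) (j : Fin r) :
    |S j j| ≤ specNorm S := by
  set T := (Matrix.toEuclideanLin S).toContinuousLinearMap with hT
  set e : EuclideanSpace ℝ (Fin r) := EuclideanSpace.single j 1 with he
  have hnorm_e : ‖e‖ = 1 := by simp [he, EuclideanSpace.norm_single]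
  have hval : (T e) j = S j j := by
    rw [hT, toEuclideanLin_apply']
    have hek : ∀ k, (e k : ℝ) = if k = j then 1 else 0 := by
      intro k
      simp [he, EuclideanSpace.single_apply]
    simp only [hek, mul_ite, mul_one, mul_zero]
    simp
  have h1 : |S j j| ≤ ‖T e‖ := by
    have hsq : |S j j| ^ 2 ≤ ‖T e‖ ^ 2 := by
      rw [euc_norm_sq, sq_abs]
      calc (S j j) ^ 2 = ((T e) j) ^ 2 := by rw [hval]
        _ ≤ ∑ i, ((T e) i) ^ 2 :=
          Finset.single_le_sum (f := fun i => ((T e) i) ^ 2)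
            (fun i _ => sq_nonneg _) (Finset.mem_univ j)
    exact real_le_of_sq_le_sq (abs_nonneg _) (norm_nonneg _) hsq
  have h2 : ‖T e‖ ≤ ‖T‖ := by
    calc ‖T e‖ ≤ ‖T‖ * ‖e‖ := T.le_opNorm e
      _ = ‖T‖ := by rw [hnorm_e, mul_one]
  exact h1.trans h2

lemma bddAbove_abs {r : ℕ} (s : Fin r → ℝ) : BddAbove (Set.range fun j => |s j|) :=
  Set.Finite.bddAbove (Set.finite_range _)

lemma ciSup_abs_nonneg {r : ℕ} (hr : 0 < r) (s : Fin r → ℝ) :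
    0 ≤ ⨆ j, |s j| :=
  le_trans (abs_nonneg _) (le_ciSup (bddAbove_abs s) ⟨0, hr⟩)

/-- The spectral norm of a diagonal matrix is at most the sup of absolute entries. -/
lemma specNorm_diagonal_le {r : ℕ} (hr : 0 < r) (s : Fin r → ℝ) :
    specNorm (Matrix.diagonal s) ≤ ⨆ j, |s j| := by
  set C := ⨆ j, |s j| with hC
  have hC0 : 0 ≤ C := ciSup_abs_nonneg hr s
  have hCj : ∀ j, |s j| ≤ C := fun j => le_ciSup (bddAbove_abs s) j
  refine ContinuousLinearMap.opNorm_le_bound _ hC0 fun x => ?_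
  have happ : ∀ i, ((Matrix.toEuclideanLin (Matrix.diagonal s)).toContinuousLinearMap x) i
      = s i * x i := by
    intro i
    rw [toEuclideanLin_apply']
    rw [Finset.sum_eq_single i (fun j _ hji => by
      simp [Matrix.diagonal_apply_ne _ (Ne.symm hji)]) (by simp)]
    simp
  have hsq : ‖(Matrix.toEuclideanLin (Matrix.diagonal s)).toContinuousLinearMap x‖ ^ 2
      ≤ (C * ‖x‖) ^ 2 := by
    rw [euc_norm_sq, mul_pow, euc_norm_sq, Finset.mul_sum]
    refine Finset.sum_le_sum fun i _ => ?_
    rw [happ i, mul_pow]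
    have h1 : (s i) ^ 2 ≤ C ^ 2 := by
      have := hCj i
      nlinarith [abs_nonneg (s i), sq_abs (s i)]
    nlinarith [sq_nonneg (x i)]
  exact real_le_of_sq_le_sq (norm_nonneg _) (by positivity) hsq

/-- **Diagonal reduction via the pinching inequality.** For `Σ = diag(σ_1,…,σ_r)` with
`σ_1 ≥ … ≥ σ_r ≥ 0` and `λ > 0`, the infimum of `‖S - Σ‖_F² + λ‖S‖₂` over all matrices
equals the infimum over diagonal matrices:
`inf_S { ‖S - Σ‖_F² + λ‖S‖₂ } = inf_{s ∈ ℝ^r} { ∑_j (s_j - σ_j)² + λ max_j |s_j| }`. -/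
theorem stmt_9 {r : ℕ} (hr : 0 < r)
    (σ : Fin r → ℝ) (hσ : Antitone σ) (hσ0 : ∀ j, 0 ≤ σ j)
    (lam : ℝ) (hlam : 0 < lam) :
    (⨅ S : Matrix (Fin r) (Fin r) ℝ,
        (frobNorm (S - Matrix.diagonal σ) ^ 2 + lam * specNorm S))
      = ⨅ s : Fin r → ℝ, (∑ j, (s j - σ j) ^ 2 + lam * ⨆ j, |s j|) := by
  haveI : Nonempty (Fin r) := ⟨⟨0, hr⟩⟩
  have hbM : BddBelow (Set.range fun S : Matrix (Fin r) (Fin r) ℝ =>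
      frobNorm (S - Matrix.diagonal σ) ^ 2 + lam * specNorm S) := by
    refine ⟨0, ?_⟩
    rintro x ⟨S, rfl⟩
    have h1 : (0:ℝ) ≤ frobNorm (S - Matrix.diagonal σ) ^ 2 := sq_nonneg _
    have h2 : 0 ≤ lam * specNorm S := mul_nonneg hlam.le (specNorm_nonneg S)
    dsimp only
    linarith
  have hbv : BddBelow (Set.range fun s : Fin r → ℝ =>
      ∑ j, (s j - σ j) ^ 2 + lam * ⨆ j, |s j|) := by
    refine ⟨0, ?_⟩
    rintro x ⟨s, rfl⟩
    have h1 : (0:ℝ) ≤ ∑ j, (s j - σ j) ^ 2 :=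
      Finset.sum_nonneg fun j _ => sq_nonneg _
    have h2 : 0 ≤ lam * ⨆ j, |s j| := mul_nonneg hlam.le (ciSup_abs_nonneg hr s)
    dsimp only
    linarith
  apply le_antisymm
  · refine le_ciInf fun s => ?_
    refine ciInf_le_of_le hbM (Matrix.diagonal s) ?_
    have hentry : ∀ i j, (Matrix.diagonal s - Matrix.diagonal σ) i j
        = if i = j then s i - σ i else 0 := by
      intro i j
      by_cases h : i = j
      · subst h; simp [Matrix.sub_apply]
      · rw [if_neg h]; simp [Matrix.sub_apply, Matrix.diagonal_apply_ne _ h]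
    have hfrob : frobNorm (Matrix.diagonal s - Matrix.diagonal σ) ^ 2
        = ∑ j, (s j - σ j) ^ 2 := by
      rw [frobNorm_sq]
      refine Finset.sum_congr rfl fun i _ => ?_
      rw [Finset.sum_eq_single i (fun j _ hji => by simp [hentry i j, Ne.symm hji])
        (by simp)]
      simp [hentry]
    have hspec := specNorm_diagonal_le hr s
    rw [hfrob]
    have := mul_le_mul_of_nonneg_left hspec hlam.le
    linarith
  · refine le_ciInf fun S => ?_
    refine ciInf_le_of_le hbv (fun j => S j j) ?_
    have hfrob : ∑ j, (S j j - σ j) ^ 2 ≤ frobNorm (S - Matrix.diagonal σ) ^ 2 := by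
      rw [frobNorm_sq]
      refine Finset.sum_le_sum fun i _ => ?_
      calc (S i i - σ i) ^ 2 = ((S - Matrix.diagonal σ) i i) ^ 2 := by
            simp [Matrix.sub_apply]
        _ ≤ ∑ j, ((S - Matrix.diagonal σ) i j) ^ 2 :=
            Finset.single_le_sum (f := fun j => ((S - Matrix.diagonal σ) i j) ^ 2)
              (fun j _ => sq_nonneg _) (Finset.mem_univ i)
    have hspec : (⨆ j, |S j j|) ≤ specNorm S :=
      ciSup_le fun j => abs_diag_le_specNorm S j
    have := mul_le_mul_of_nonneg_left hspec hlam.le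
    linarith
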